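/- arXiv:2210.05266 — 3 statements merged into one kernel-verified Lean document; each statement's English description precedes it below -/
import Mathlib

section
/- Let A be a commutative ℂ-algebra, φ : A → ℂ a linear functional, R : A → A a ℂ-linear derivation which is locally nilpotent (for every a ∈ A there exists N with R^N a = 0), F ∈ A, and r ∈ ℂ with r ≠ 0 and R(F) = r·1. Let (L_j)_{j ≥ −1} be linear endomorphisms of A such that: (i) L_j(F·a) = F·L_j(a) for all a ∈ A and all j ≥ −1; (ii) φ(F·a) = 0 for all a ∈ A; (iii) there exists N such that φ(L_k(a)) = 0 for all k > N and all a ∈ A. Define L_wt0(a) = ∑_{j ≥ −1} ((−1)^j/(j+1)!)·L_j(R^{j+1}(a)), a finite sum by local nilpotence. Then φ(L_wt0(a)) = 0 for all a ∈ A if and only if φ(L_k(a)) = 0 for all k ≥ −1 and all a ∈ A. -/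
/-!
Write `S_s = ∑ₙ (-1)ⁿ/n! • L_{n+s} ∘ Rⁿ`, so that `L_wt0 = -S_{-1}`. Since
`Rⁿ⁺¹(F a) = F Rⁿ⁺¹ a + (n+1) r Rⁿ a`, property (i) gives `S_s(F a) = F S_s(a) - r S_{s+1}(a)`,
and by (ii) `φ(S_s(F a)) = -r φ(S_{s+1}(a))`: the weight-zero constraints `φ ∘ S_{-1} = 0`
propagate to `φ ∘ S_s = 0` for every `s ≥ -1`. On the other hand `φ ∘ S_k = φ ∘ L_k` as soon as
`φ ∘ L_j = 0` for all `j > k`, so a downward induction starting from (iii) gives `φ ∘ L_k = 0`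
for all `k ≥ -1`.
-/

open Finset

theorem Int.strong_downward_induction {P : ℤ → Prop} {N : ℤ} (hN : ∀ k, N < k → P k)
    (step : ∀ k, (∀ j, k < j → P j) → P k) (k : ℤ) : P k := by
  suffices ∀ n : ℤ, P (-n) by simpa using this (-k)
  intro n
  induction n using Int.strongRec (m := -N) with
  | lt n hn => exact hN _ (by omega)
  | ge n _ ih => exact step _ fun j hj => by simpa using ih (-j) (by omega)

theorem Derivation.pow_succ_apply_mul_of_apply_eq_smul_one {R A : Type*} [CommSemiring R]
    [CommSemiring A] [Algebra R A] (D : Derivation R A A) {F : A} {r : R} (hF : D F = r • 1)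
    (n : ℕ) (a : A) :
    (D.toLinearMap ^ (n + 1)) (F * a) =
      F * (D.toLinearMap ^ (n + 1)) a + ((n + 1 : R) * r) • (D.toLinearMap ^ n) a := by
  have hD : ∀ x, D (F * x) = F * D x + r • x := fun x => by
    rw [Derivation.leibniz, hF, smul_comm, smul_eq_mul, smul_eq_mul, mul_one]
  have hpow : ∀ k x, (D.toLinearMap ^ (k + 1)) x = D ((D.toLinearMap ^ k) x) := fun k x => by
    rw [pow_succ', Module.End.mul_apply, Derivation.coeFn_coe]
  induction n generalizing a with
  | zero => simpa using hD a
  | succ n ih =>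
    rw [hpow (n + 1), ih]
    simp only [hpow, map_add, hD, D.map_smul]
    push_cast
    module

theorem neg_one_pow_succ_div_factorial_succ_mul {𝕜 : Type*} [Field 𝕜] [CharZero 𝕜] (m : ℕ) :
    (-1 : 𝕜) ^ (m + 1) / (m + 1).factorial * (m + 1) = -((-1) ^ m / m.factorial) := by
  rw [Nat.factorial_succ]
  push_cast
  field_simp
  ring

section

variable {𝕜 A : Type*} [DivisionRing 𝕜] [AddCommGroup A] [Module 𝕜 A]

noncomputable def virasoroShift (L : ℤ → A →ₗ[𝕜] A) (D : Module.End 𝕜 A) (s : ℤ) (a : A) : A :=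
  ∑ᶠ n : ℕ, ((-1 : 𝕜) ^ n / n.factorial) • L (n + s) ((D ^ n) a)

variable {L : ℤ → A →ₗ[𝕜] A} {D : Module.End 𝕜 A}

theorem virasoroShift_eq_sum_range {a : A} {M : ℕ} (hM : (D ^ M) a = 0) (s : ℤ) :
    virasoroShift L D s a =
      ∑ n ∈ range M, ((-1 : 𝕜) ^ n / n.factorial) • L (n + s) ((D ^ n) a) := by
  refine finsum_eq_finsetSum_of_support_subset _ fun n hn => ?_
  by_contra hnM
  rw [coe_range, Set.mem_Iio, not_lt] at hnM
  exact hn (by dsimp only; rw [Module.End.pow_map_zero_of_le hnM hM, map_zero, smul_zero])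

theorem finsum_neg_one_pow_succ_smul_eq_neg_virasoroShift (a : A) :
    ∑ᶠ n : ℕ, ((-1 : 𝕜) ^ (n + 1) / n.factorial) • L (n - 1) ((D ^ n) a) =
      -virasoroShift L D (-1) a := by
  rw [virasoroShift, ← finsum_neg_distrib]
  refine finsum_congr fun n => ?_
  rw [pow_succ, mul_neg_one, neg_div, neg_smul, sub_eq_add_neg]

theorem apply_virasoroShift_eq_of_forall_gt {V : Type*} [AddCommGroup V] [Module 𝕜 V]
    (φ : A →ₗ[𝕜] V) {a : A} (ha : ∃ M, (D ^ M) a = 0) {k : ℤ}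
    (hφL : ∀ j, k < j → ∀ b, φ (L j b) = 0) : φ (virasoroShift L D k a) = φ (L k a) := by
  obtain ⟨M, hM⟩ := ha
  rw [virasoroShift_eq_sum_range (Module.End.pow_map_zero_of_le M.le_succ hM), map_sum,
    sum_range_succ']
  have hhigher : ∀ n : ℕ, φ (((-1 : 𝕜) ^ (n + 1) / (n + 1).factorial) •
      L ((n + 1 : ℕ) + k) ((D ^ (n + 1)) a)) = 0 := fun n => by
    rw [map_smul, hφL _ (by omega), smul_zero]
  rw [sum_eq_zero fun n _ => hhigher n, zero_add]
  simp

end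

theorem virasoroShift_mul_of_apply_eq_smul_one {𝕜 A : Type*} [Field 𝕜] [CharZero 𝕜] [CommRing A]
    [Algebra 𝕜 A] {L : ℤ → A →ₗ[𝕜] A} {D : Derivation 𝕜 A A} {F : A} {r : 𝕜}
    (hF : D F = r • 1) {s : ℤ} (hLF : ∀ j, s ≤ j → ∀ b, L j (F * b) = F * L j b) {a : A}
    (ha : ∃ M, (D.toLinearMap ^ M) a = 0) :
    virasoroShift L D s (F * a) =
      F * virasoroShift L D s a - r • virasoroShift L D (s + 1) a := by
  obtain ⟨M, hM⟩ := ha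
  have hM' := Module.End.pow_map_zero_of_le M.le_succ hM
  have hFM : (D.toLinearMap ^ (M + 1)) (F * a) = 0 := by
    rw [D.pow_succ_apply_mul_of_apply_eq_smul_one hF, hM, hM', mul_zero, smul_zero, add_zero]
  have hterm : ∀ m ∈ range M,
      ((-1 : 𝕜) ^ (m + 1) / (m + 1).factorial) •
        L ((m + 1 : ℕ) + s) ((D.toLinearMap ^ (m + 1)) (F * a)) =
      F * (((-1 : 𝕜) ^ (m + 1) / (m + 1).factorial) •
        L ((m + 1 : ℕ) + s) ((D.toLinearMap ^ (m + 1)) a)) -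
      r • (((-1 : 𝕜) ^ m / m.factorial) • L (m + (s + 1)) ((D.toLinearMap ^ m) a)) := by
    intro m _
    have hidx : ((m + 1 : ℕ) : ℤ) + s = m + (s + 1) := by push_cast; ring
    rw [D.pow_succ_apply_mul_of_apply_eq_smul_one hF, map_add, map_smul, hLF _ (by omega),
      smul_add, smul_smul, mul_smul_comm, hidx, smul_smul, ← mul_assoc,
      neg_one_pow_succ_div_factorial_succ_mul, neg_mul, neg_smul, mul_comm r, ← sub_eq_add_neg]
  rw [virasoroShift_eq_sum_range hFM, virasoroShift_eq_sum_range hM',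
    virasoroShift_eq_sum_range hM, sum_range_succ', sum_range_succ', sum_congr rfl hterm,
    sum_sub_distrib, ← mul_sum, ← smul_sum]
  simp only [pow_zero, Module.End.one_apply, Nat.factorial_zero, Nat.cast_one, div_one, one_smul,
    Nat.cast_zero, zero_add, hLF s le_rfl]
  ring

theorem apply_virasoroShift_eq_zero_of_le {𝕜 A V : Type*} [Field 𝕜] [CharZero 𝕜] [CommRing A]
    [Algebra 𝕜 A] [AddCommGroup V] [Module 𝕜 V] {L : ℤ → A →ₗ[𝕜] A} {D : Derivation 𝕜 A A}
    (hD : ∀ a, ∃ M, (D.toLinearMap ^ M) a = 0) {F : A} {r : 𝕜} (hr : r ≠ 0)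
    (hF : D F = r • 1) (φ : A →ₗ[𝕜] V) (hφF : ∀ a, φ (F * a) = 0) {s₀ : ℤ}
    (hLF : ∀ j, s₀ ≤ j → ∀ b, L j (F * b) = F * L j b)
    (h₀ : ∀ a, φ (virasoroShift L D s₀ a) = 0) :
    ∀ s, s₀ ≤ s → ∀ a, φ (virasoroShift L D s a) = 0 := by
  intro s hs
  induction s, hs using Int.leInduction with
  | base => exact h₀
  | succ s hs ih =>
    intro a
    have hFa := congrArg φ (virasoroShift_mul_of_apply_eq_smul_one hF
      (fun j hj => hLF j (hs.trans hj)) (hD a))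
    rw [ih, map_sub, hφF, zero_sub, map_smul, zero_eq_neg, smul_eq_zero] at hFa
    exact hFa.resolve_left hr

/-- Proposition 2.16, abstract form: for a commutative ℂ-algebra `A`,
a linear functional `φ`, a locally nilpotent derivation `R`, `F ∈ A` with `R F = r·1`
(`r ≠ 0`), and operators `(L_j)_{j ≥ -1}` satisfying (i) `L_j(F·a) = F·L_j(a)`,
(ii) `φ(F·a) = 0`, (iii) `φ ∘ L_k = 0` for `k` large, the weight-zero constraints
`φ(L_wt0 a) = 0` hold for all `a` iff `φ(L_k a) = 0` for all `k ≥ -1` and all `a`. -/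
theorem weight_zero_virasoro_iff_normalized_virasoro
    (A : Type*) [CommRing A] [Algebra ℂ A]
    (φ : A →ₗ[ℂ] ℂ)
    (R : Derivation ℂ A A)
    (hR : ∀ a : A, ∃ N : ℕ, (R.toLinearMap ^ N) a = 0)
    (F : A) (r : ℂ) (hr : r ≠ 0) (hRF : R F = r • (1 : A))
    (L : ℤ → (A →ₗ[ℂ] A))
    (hLF : ∀ j : ℤ, -1 ≤ j → ∀ a : A, L j (F * a) = F * L j a)
    (hφF : ∀ a : A, φ (F * a) = 0)
    (hvan : ∃ N : ℤ, ∀ k : ℤ, N < k → ∀ a : A, φ (L k a) = 0)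
    (Lwt0 : A → A)
    (hLwt0 : ∀ a : A,
      Lwt0 a = ∑ᶠ n : ℕ, ((-1 : ℂ) ^ (n + 1) / (n.factorial : ℂ)) •
        (L ((n : ℤ) - 1)) ((R.toLinearMap ^ n) a)) :
    (∀ a : A, φ (Lwt0 a) = 0) ↔ (∀ k : ℤ, -1 ≤ k → ∀ a : A, φ (L k a) = 0) := by
  obtain ⟨N, hN⟩ := hvan
  have hLwt0S : ∀ a, φ (Lwt0 a) = -φ (virasoroShift L R (-1) a) := fun a => by
    rw [hLwt0, finsum_neg_one_pow_succ_smul_eq_neg_virasoroShift, map_neg]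
  have hSL : ∀ k, (∀ j, k < j → ∀ b, φ (L j b) = 0) → ∀ a,
      φ (virasoroShift L R k a) = φ (L k a) :=
    fun k h a => apply_virasoroShift_eq_of_forall_gt φ (hR a) h
  constructor
  · intro hwt
    have hS : ∀ s, -1 ≤ s → ∀ a, φ (virasoroShift L R s a) = 0 :=
      apply_virasoroShift_eq_zero_of_le hR hr hRF φ hφF hLF fun a => by
        simpa [hLwt0S] using hwt a
    refine Int.strong_downward_induction (fun k hk _ => hN k hk) fun k hgt hk a => ?_
    rw [← hSL k fun j hj => hgt j hj (by omega), hS k hk]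
  · intro h a
    rw [hLwt0S, hSL (-1) fun j hj => h j (by omega), h (-1) le_rfl, neg_zero]
end

section
/- Let A be a commutative ℂ-algebra, R : A → A a ℂ-linear derivation which is locally nilpotent, r ∈ ℂ with r ≠ 0, and (c_j)_{j ≥ 0} elements of A with c_0 = r·1 and R(c_{j+1}) = c_j for all j ≥ 0. For j ≥ −1 define the operator S_j : A → A by S_j(a) = −((j+1)!/r)·R(c_{j+1}·a). Then for every a ∈ A, ∑_{j ≥ −1} ((−1)^j/(j+1)!)·S_j(R^{j+1}(a)) = 0, the sum being finite by local nilpotence of R. -/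
/-! With `v n = (-1)^n c_n R^{n+1} a`, the Leibniz rule and `R c_{n+1} = c_n` give
`(-1)^n R(c_n R^n a) = v n - v (n-1)` (and `R c_0 = 0` starts the chain), so the sum
telescopes to `v N`, which vanishes once `R^N a = 0`. The prefactors `(-1)^(n+1)/n!` and
`-n!/r` of the sum combine to `(-1)^n / r`. -/

open Finset

namespace Derivation

variable {K A : Type*} [CommRing K] [CommRing A] [Algebra K A]

theorem toLinearMap_pow_succ_apply (D : Derivation K A A) (n : ℕ) (a : A) :
    (D.toLinearMap ^ (n + 1)) a = D ((D.toLinearMap ^ n) a) := by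
  rw [pow_succ', Module.End.mul_apply, coeFn_coe]

theorem sum_range_neg_one_pow_smul_apply_mul_pow_apply (D : Derivation K A A) {c : ℕ → A}
    (hc0 : D (c 0) = 0) (hc : ∀ n, D (c (n + 1)) = c n) (a : A) (N : ℕ) :
    ∑ n ∈ range (N + 1), (-1 : K) ^ n • D (c n * (D.toLinearMap ^ n) a) =
      (-1 : K) ^ N • (c N * (D.toLinearMap ^ (N + 1)) a) := by
  induction N with
  | zero => simp [D.leibniz, hc0]
  | succ N ih =>
    rw [sum_range_succ, ih, D.leibniz, hc, ← toLinearMap_pow_succ_apply, pow_succ (-1 : K) N,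
      mul_neg_one, neg_smul, neg_smul, smul_add, smul_eq_mul, smul_eq_mul, mul_comm _ (c N)]
    abel

theorem finsum_neg_one_pow_smul_apply_mul_pow_apply_eq_zero (D : Derivation K A A)
    {c : ℕ → A} (hc0 : D (c 0) = 0) (hc : ∀ n, D (c (n + 1)) = c n) {a : A} {N : ℕ}
    (hN : (D.toLinearMap ^ N) a = 0) :
    ∑ᶠ n : ℕ, (-1 : K) ^ n • D (c n * (D.toLinearMap ^ n) a) = 0 := by
  have hsupp : Function.support (fun n => (-1 : K) ^ n • D (c n * (D.toLinearMap ^ n) a)) ⊆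
      range (N + 1) := by
    intro n hn
    by_contra hnN
    simp only [coe_range, Set.mem_Iio, not_lt] at hnN
    apply hn
    simp [Module.End.pow_map_zero_of_le (by omega : N ≤ n) hN]
  rw [finsum_eq_sum_of_support_subset _ hsupp,
    sum_range_neg_one_pow_smul_apply_mul_pow_apply D hc0 hc,
    Module.End.pow_map_zero_of_le N.le_succ hN, mul_zero, smul_zero]

end Derivation

theorem Sj_weight_zero_sum_vanishes_general
    (A : Type*) [CommRing A] [Algebra ℂ A]
    (R : Derivation ℂ A A)
    (hR : ∀ a : A, ∃ N : ℕ, (R.toLinearMap ^ N) a = 0)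
    (r : ℂ)
    (c : ℕ → A) (hc0 : c 0 = r • (1 : A))
    (hcR : ∀ j : ℕ, R (c (j + 1)) = c j)
    (S : ℤ → A → A)
    (hS : ∀ j : ℤ, -1 ≤ j → ∀ a : A,
      S j a = -((((j + 1).toNat.factorial : ℂ)) / r) • R (c (j + 1).toNat * a)) :
    ∀ a : A,
      ∑ᶠ n : ℕ, ((-1 : ℂ) ^ (n + 1) / (n.factorial : ℂ)) •
        S ((n : ℤ) - 1) ((R.toLinearMap ^ n) a) = 0 := by
  intro a
  obtain ⟨N, hN⟩ := hR a
  have hterm : ∀ n : ℕ, ((-1 : ℂ) ^ (n + 1) / (n.factorial : ℂ)) •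
      S ((n : ℤ) - 1) ((R.toLinearMap ^ n) a) =
        r⁻¹ • ((-1 : ℂ) ^ n • R (c n * (R.toLinearMap ^ n) a)) := by
    intro n
    have hfac : (n.factorial : ℂ) ≠ 0 := by exact_mod_cast n.factorial_ne_zero
    rw [hS _ (by omega), sub_add_cancel, Int.toNat_natCast, smul_smul, smul_smul]
    congr 1
    field_simp
    ring
  have hRc0 : R (c 0) = 0 := by rw [hc0, R.map_smul, R.map_one_eq_zero, smul_zero]
  rw [finsum_congr hterm, ← smul_finsum,
    R.finsum_neg_one_pow_smul_apply_mul_pow_apply_eq_zero hRc0 hcR hN, smul_zero]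

/-- identity (2.3) in the proof of Proposition 2.16: for a commutative
ℂ-algebra `A`, a locally nilpotent derivation `R`, `r ≠ 0`, and elements `c_j` with
`c_0 = r·1` and `R(c_{j+1}) = c_j`, the operators
`S_j(a) = -((j+1)!/r)·R(c_{j+1}·a)` (for `j ≥ -1`) satisfy
`∑_{j ≥ -1} ((-1)^j/(j+1)!)·S_j(R^{j+1} a) = 0` (reindexed by `n = j + 1 : ℕ`). -/
theorem Sj_weight_zero_sum_vanishes
    (A : Type*) [CommRing A] [Algebra ℂ A]
    (R : Derivation ℂ A A)
    (hR : ∀ a : A, ∃ N : ℕ, (R.toLinearMap ^ N) a = 0)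
    (r : ℂ) (hr : r ≠ 0)
    (c : ℕ → A) (hc0 : c 0 = r • (1 : A))
    (hcR : ∀ j : ℕ, R (c (j + 1)) = c j)
    (S : ℤ → A → A)
    (hS : ∀ j : ℤ, -1 ≤ j → ∀ a : A,
      S j a = -((((j + 1).toNat.factorial : ℂ)) / r) • R (c (j + 1).toNat * a)) :
    ∀ a : A,
      ∑ᶠ n : ℕ, ((-1 : ℂ) ^ (n + 1) / (n.factorial : ℂ)) •
        S ((n : ℤ) - 1) ((R.toLinearMap ^ n) a) = 0 :=
  Sj_weight_zero_sum_vanishes_general A R hR r c hc0 hcR S hS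
end

section
/- Let K be a field and V a finite-dimensional K-vector space equipped with a bilinear form χ : V × V → K which is nondegenerate (if χ(v,−) = 0 then v = 0, and if χ(−,v) = 0 then v = 0). Define a bilinear form on V ⊕ V by χ^pa_sym((v₁,v₂),(w₁,w₂)) = χ(v₂−v₁, w₂) + χ(w₂−w₁, v₂). Then χ^pa_sym is a symmetric nondegenerate bilinear form on V ⊕ V. -/
/-!
With `χ^pa((v₁,v₂),(w₁,w₂)) = χ(v₂ - v₁, w₂)`, the form `χ^pa_sym = χ^pa + (χ^pa)ᵀ` is symmetric,
so it suffices to show that it is left-separating. Pairing `(v₁,v₂)` against `(w,0)` gives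
`-χ(w, v₂)`, which forces `v₂ = 0`; pairing it then against `(0,w)` gives `-χ(v₁, w)`, which
forces `v₁ = 0`.
-/

namespace LinearMap

variable {R M : Type*} [CommRing R] [AddCommGroup M] [Module R M]

theorem isSymm_add_flip (B : M →ₗ[R] M →ₗ[R] R) : (B + B.flip).IsSymm :=
  ⟨fun _ _ ↦ add_comm _ _⟩

def pairForm (χ : M →ₗ[R] M →ₗ[R] R) : (M × M) →ₗ[R] (M × M) →ₗ[R] R :=
  χ.compl₁₂ (snd R M M - fst R M M) (snd R M M)

@[simp]
theorem pairForm_apply (χ : M →ₗ[R] M →ₗ[R] R) (p q : M × M) :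
    pairForm χ p q = χ (p.2 - p.1) q.2 :=
  rfl

theorem separatingLeft_pairForm_add_flip {χ : M →ₗ[R] M →ₗ[R] R} (hχ : χ.Nondegenerate) :
    (pairForm χ + (pairForm χ).flip).SeparatingLeft := by
  intro p hp
  have h₂ : p.2 = 0 := hχ.2 _ fun w ↦ by simpa using hp (w, 0)
  have h₁ : p.1 = 0 := hχ.1 _ fun w ↦ by simpa [h₂] using hp (0, w)
  exact Prod.ext h₁ h₂

theorem nondegenerate_pairForm_add_flip {χ : M →ₗ[R] M →ₗ[R] R} (hχ : χ.Nondegenerate) :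
    (pairForm χ + (pairForm χ).flip).Nondegenerate :=
  (isSymm_add_flip _).isRefl.nondegenerate_iff_separatingLeft.mpr
    (separatingLeft_pairForm_add_flip hχ)

end LinearMap

theorem pair_euler_symmetrization_nondegenerate_general
    (K : Type*) [Field K] (V : Type*) [AddCommGroup V] [Module K V]
    (χ : V →ₗ[K] V →ₗ[K] K)
    (hχ₁ : ∀ v : V, (∀ w : V, χ v w = 0) → v = 0)
    (hχ₂ : ∀ w : V, (∀ v : V, χ v w = 0) → w = 0)
    (Q : (V × V) →ₗ[K] (V × V) →ₗ[K] K)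
    (hQ : ∀ p q : V × V, Q p q = χ (p.2 - p.1) q.2 + χ (q.2 - q.1) p.2) :
    (∀ p q : V × V, Q p q = Q q p) ∧
    (∀ p : V × V, (∀ q : V × V, Q p q = 0) → p = 0) ∧
    (∀ q : V × V, (∀ p : V × V, Q p q = 0) → q = 0) := by
  obtain rfl : Q = χ.pairForm + χ.pairForm.flip := LinearMap.ext₂ fun p q ↦ by simp [hQ]
  have hnd := LinearMap.nondegenerate_pairForm_add_flip (χ := χ) ⟨hχ₁, hχ₂⟩
  exact ⟨(LinearMap.isSymm_add_flip _).eq, hnd.1, hnd.2⟩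

/-- Lemma 4.3: if `χ` is a nondegenerate bilinear form on a
finite-dimensional `K`-vector space `V`, then the bilinear form on `V ⊕ V` given by
`χ^pa_sym((v₁,v₂),(w₁,w₂)) = χ(v₂-v₁, w₂) + χ(w₂-w₁, v₂)` is symmetric and
nondegenerate. -/
theorem pair_euler_symmetrization_nondegenerate
    (K : Type*) [Field K] (V : Type*) [AddCommGroup V] [Module K V]
    [FiniteDimensional K V]
    (χ : V →ₗ[K] V →ₗ[K] K)
    (hχ₁ : ∀ v : V, (∀ w : V, χ v w = 0) → v = 0)
    (hχ₂ : ∀ w : V, (∀ v : V, χ v w = 0) → w = 0)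
    (Q : (V × V) →ₗ[K] (V × V) →ₗ[K] K)
    (hQ : ∀ p q : V × V, Q p q = χ (p.2 - p.1) q.2 + χ (q.2 - q.1) p.2) :
    (∀ p q : V × V, Q p q = Q q p) ∧
    (∀ p : V × V, (∀ q : V × V, Q p q = 0) → p = 0) ∧
    (∀ q : V × V, (∀ p : V × V, Q p q = 0) → q = 0) :=
  pair_euler_symmetrization_nondegenerate_general K V χ hχ₁ hχ₂ Q hQ
end
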